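/- (Variance decomposition) Let d ≥ 1, let μ_j (j ∈ Fin d) be probability measures on ℝ, let μ := ⊗_j μ_j be their product measure on (Fin d → ℝ), and let f : (Fin d → ℝ) → ℝ be bounded and measurable. For u ⊆ Fin d define F_u(x) := ∫ f(x_u : z_{−u}) dμ(z), f_u := Σ_{v ⊆ u} (−1)^{|u|−|v|} F_v, σ² := ∫ (f(x) − ∫ f dμ)² dμ(x), and σ²_u := ∫ f_u(x)² dμ(x) for u ≠ ∅. Then σ² = Σ_{u ⊆ Fin d, u ≠ ∅} σ²_u. -/

import Mathlib

open MeasureTheory Finset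

/-- Partial dependence function: `F_u(x) = ∫ f(x_u : z_{-u}) dμ(z)`, where the hybrid
point `(x_u : z_{-u})` takes coordinate `x j` for `j ∈ u` and `z j` otherwise. -/
noncomputable def partialDep {d : ℕ} (μ : Fin d → Measure ℝ)
    (f : (Fin d → ℝ) → ℝ) (u : Finset (Fin d)) (x : Fin d → ℝ) : ℝ :=
  ∫ z, f (fun j => if j ∈ u then x j else z j) ∂(Measure.pi μ)

/-- PDD component: `f_u = Σ_{v ⊆ u} (-1)^(|u|-|v|) F_v`. -/
noncomputable def pddComp {d : ℕ} (μ : Fin d → Measure ℝ)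
    (f : (Fin d → ℝ) → ℝ) (u : Finset (Fin d)) (x : Fin d → ℝ) : ℝ :=
  ∑ v ∈ u.powerset, (-1 : ℝ) ^ (u.card - v.card) * partialDep μ f v x

open scoped ENNReal

/-!
Möbius inversion on the Boolean lattice turns the definition of `f_u` into `∑_{v ⊆ u} f_v = F_u`;
for `u = univ` this reads `f - ∫ f = ∑_{u ≠ ∅} f_u`, so it suffices that the `f_u` are pairwise
orthogonal in `L²(μ)`. Because `(x, z) ↦ (x_s : z_{-s})` pushes `μ ⊗ μ` forward to `μ`, functions
of disjoint sets of coordinates are uncorrelated and `∫ F_a(x_s : z) dμ(z) = F_s(x)` for `s ⊆ a`;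
together these give `∫ F_a F_b = ∫ F_{a ∩ b}²`. If `j ∈ u \ v`, then for every `b ⊆ v` the
alternating sum `∫ f_u F_b = ∑_{a ⊆ u} ± ∫ F_{a ∩ b}²` pairs `a` with `insert j a` and vanishes;
hence `∫ f_u f_v = 0`.
-/

section Piecewise

variable {ι : Type*} [DecidableEq ι] {X : ι → Type*} [∀ i, MeasurableSpace (X i)]

theorem measurable_piecewise_prod (s : Finset ι) :
    Measurable fun p : (∀ i, X i) × (∀ i, X i) => s.piecewise p.1 p.2 := by
  refine measurable_pi_lambda _ fun i => ?_
  by_cases hi : i ∈ s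
  · simp only [piecewise_eq_of_mem _ _ _ hi]; fun_prop
  · simp only [piecewise_eq_of_notMem _ _ _ hi]; fun_prop

variable [Fintype ι] (μ : ∀ i, Measure (X i)) [∀ i, IsProbabilityMeasure (μ i)]

theorem measurePreserving_piecewise_prod (s : Finset ι) :
    MeasurePreserving (fun p : (∀ i, X i) × (∀ i, X i) => s.piecewise p.1 p.2)
      ((Measure.pi μ).prod (Measure.pi μ)) (Measure.pi μ) where
  measurable := measurable_piecewise_prod s
  map_eq := by
    refine (Measure.pi_eq fun A hA => ?_).symm
    have hpre : (fun p : (∀ i, X i) × (∀ i, X i) => s.piecewise p.1 p.2) ⁻¹' Set.univ.pi A =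
        Set.univ.pi (s.piecewise A fun _ => Set.univ) ×ˢ
          Set.univ.pi (s.piecewise (fun _ => Set.univ) A) := by
      ext p
      simp only [Set.mem_preimage, Set.mem_prod, Set.mem_univ_pi, ← forall_and]
      refine forall_congr' fun i => ?_
      by_cases hi : i ∈ s <;> simp [hi]
    rw [Measure.map_apply (measurable_piecewise_prod s) (.univ_pi hA), hpre, Measure.prod_prod,
      Measure.pi_pi, Measure.pi_pi, ← prod_mul_distrib]
    refine prod_congr rfl fun i _ => ?_
    by_cases hi : i ∈ s <;> simp [hi]

theorem integral_integral_piecewise {E : Type*} [NormedAddCommGroup E] [NormedSpace ℝ E]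
    (s : Finset ι) {g : (∀ i, X i) → E} (hg : Integrable g (Measure.pi μ)) :
    ∫ x, ∫ z, g (s.piecewise x z) ∂Measure.pi μ ∂Measure.pi μ = ∫ x, g x ∂Measure.pi μ := by
  have hmp := measurePreserving_piecewise_prod μ s
  have hgm : AEStronglyMeasurable g (Measure.map _ _) := hmp.map_eq ▸ hg.aestronglyMeasurable
  rw [← integral_prod (fun p => g (s.piecewise p.1 p.2))
      ((hmp.integrable_comp hg.aestronglyMeasurable).2 hg),
    ← integral_map hmp.measurable.aemeasurable hgm, hmp.map_eq]

theorem integral_mul_eq_mul_integral_of_piecewise (s : Finset ι) {g₁ g₂ : (∀ i, X i) → ℝ}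
    (hg : Integrable (fun x => g₁ x * g₂ x) (Measure.pi μ))
    (h₁ : ∀ x z, g₁ (s.piecewise x z) = g₁ x) (h₂ : ∀ x z, g₂ (s.piecewise x z) = g₂ z) :
    ∫ x, g₁ x * g₂ x ∂Measure.pi μ = (∫ x, g₁ x ∂Measure.pi μ) * ∫ x, g₂ x ∂Measure.pi μ := by
  rw [← integral_integral_piecewise μ s hg, ← integral_mul_const]
  simp only [h₁, h₂, integral_const_mul]

end Piecewise

theorem integral_sum_sq_of_orthogonal {α ι : Type*} [MeasurableSpace α] {ν : Measure α}
    (s : Finset ι) {g : ι → α → ℝ} (hg : ∀ i ∈ s, MemLp (g i) 2 ν)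
    (horth : ∀ i ∈ s, ∀ j ∈ s, i ≠ j → ∫ x, g i x * g j x ∂ν = 0) :
    ∫ x, (∑ i ∈ s, g i x) ^ 2 ∂ν = ∑ i ∈ s, ∫ x, g i x ^ 2 ∂ν := by
  have hint : ∀ i ∈ s, ∀ j ∈ s, Integrable (fun x => g i x * g j x) ν :=
    fun i hi j hj => (hg i hi).integrable_mul (hg j hj)
  simp_rw [sq, sum_mul_sum]
  rw [integral_finsetSum _ fun i hi => integrable_finsetSum _ fun j hj => hint i hi j hj]
  refine sum_congr rfl fun i hi => ?_
  rw [integral_finsetSum _ fun j hj => hint i hi j hj,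
    sum_eq_single_of_mem i hi fun j hj hji => horth i hi j hj hji.symm]

namespace Finset

variable {α R : Type*} [DecidableEq α] [CommRing R]

theorem sum_Icc_neg_one_pow_card_sub {w u : Finset α} (hwu : w ⊆ u) :
    ∑ v ∈ Icc w u, (-1 : R) ^ (#v - #w) = if w = u then 1 else 0 := by
  have hdisj : ∀ t ∈ (u \ w).powerset, Disjoint w t := fun t ht =>
    disjoint_of_subset_right (mem_powerset.1 ht) disjoint_sdiff
  have hinj : Set.InjOn (w ∪ ·) (u \ w).powerset := fun t ht t' ht' h => by
    simpa [union_sdiff_cancel_left (hdisj t ht), union_sdiff_cancel_left (hdisj t' ht')] using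
      congrArg (· \ w) h
  rw [Icc_eq_image_powerset hwu, sum_image hinj]
  have hcard : ∀ t ∈ (u \ w).powerset, #(w ∪ t) - #w = #t := fun t ht => by
    rw [card_union_of_disjoint (hdisj t ht), Nat.add_sub_cancel_left]
  rw [sum_congr rfl fun t ht => by rw [hcard t ht]]
  have := congrArg (Int.cast : ℤ → R) (sum_powerset_neg_one_pow_card (x := u \ w))
  push_cast at this
  rw [this]
  exact if_congr (sdiff_eq_empty_iff_subset.trans ⟨subset_antisymm hwu, fun h => h ▸ subset_rfl⟩)
    rfl rfl

theorem moebius_inversion_powerset (F : Finset α → R) (u : Finset α) :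
    ∑ v ∈ u.powerset, ∑ w ∈ v.powerset, (-1 : R) ^ (#v - #w) * F w = F u := by
  rw [sum_comm' (t' := u.powerset) (s' := fun w => Icc w u)]
  · simp_rw [← sum_mul]
    rw [sum_congr rfl fun w hw => by rw [sum_Icc_neg_one_pow_card_sub (mem_powerset.1 hw)]]
    simp
  · intro v w
    simp only [mem_powerset, mem_Icc]
    exact ⟨fun ⟨h1, h2⟩ => ⟨⟨h2, h1⟩, h2.trans h1⟩, fun ⟨⟨h1, h2⟩, _⟩ => ⟨h2, h1⟩⟩

theorem sum_powerset_neg_one_pow_mul_eq_zero {u : Finset α} {j : α} (hj : j ∈ u)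
    {h : Finset α → R} (hh : ∀ a, h (insert j a) = h a) :
    ∑ a ∈ u.powerset, (-1 : R) ^ (#u - #a) * h a = 0 := by
  rw [← insert_erase hj, sum_powerset_insert (notMem_erase j u), ← sum_add_distrib]
  refine sum_eq_zero fun a ha => ?_
  have hja : j ∉ a := fun hja => notMem_erase j u (mem_powerset.1 ha hja)
  have hle : #a ≤ #(u.erase j) := card_le_card (mem_powerset.1 ha)
  rw [hh, card_insert_of_notMem hja, card_insert_of_notMem (notMem_erase j u),
    Nat.add_sub_add_right, Nat.succ_sub hle, pow_succ]
  ring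

end Finset

section PartialDependence

variable {d : ℕ} {μ : Fin d → Measure ℝ} {f : (Fin d → ℝ) → ℝ} {C : ℝ}

theorem partialDep_apply (u : Finset (Fin d)) (x : Fin d → ℝ) :
    partialDep μ f u x = ∫ z, f (u.piecewise x z) ∂Measure.pi μ :=
  rfl

theorem partialDep_empty (x : Fin d → ℝ) : partialDep μ f ∅ x = ∫ z, f z ∂Measure.pi μ := by
  simp [partialDep_apply]

theorem partialDep_congr (u : Finset (Fin d)) {x y : Fin d → ℝ} (h : ∀ i ∈ u, x i = y i) :
    partialDep μ f u x = partialDep μ f u y := by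
  simp only [partialDep_apply, u.piecewise_congr h fun _ _ => rfl]

variable [∀ i, IsProbabilityMeasure (μ i)]

theorem partialDep_univ (x : Fin d → ℝ) : partialDep μ f univ x = f x := by
  simp [partialDep_apply]

theorem measurable_partialDep (hf : Measurable f) (u : Finset (Fin d)) :
    Measurable (partialDep μ f u) :=
  ((hf.comp (measurable_piecewise_prod u)).stronglyMeasurable.integral_prod_right').measurable

theorem abs_partialDep_le (hC : ∀ x, |f x| ≤ C) (u : Finset (Fin d)) (x : Fin d → ℝ) :
    |partialDep μ f u x| ≤ C := by
  simpa [partialDep_apply] using norm_integral_le_of_norm_le_const (μ := Measure.pi μ)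
    (f := fun z => f (u.piecewise x z)) (ae_of_all _ fun _ => hC _)

theorem memLp_partialDep_comp (hf : Measurable f) (hC : ∀ x, |f x| ≤ C) (u : Finset (Fin d))
    {φ : (Fin d → ℝ) → Fin d → ℝ} (hφ : Measurable φ) (p : ℝ≥0∞) :
    MemLp (fun x => partialDep μ f u (φ x)) p (Measure.pi μ) :=
  .of_bound ((measurable_partialDep hf u).comp hφ).aestronglyMeasurable C
    (ae_of_all _ fun _ => abs_partialDep_le hC u _)

theorem memLp_partialDep (hf : Measurable f) (hC : ∀ x, |f x| ≤ C) (u : Finset (Fin d))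
    (p : ℝ≥0∞) : MemLp (partialDep μ f u) p (Measure.pi μ) :=
  memLp_partialDep_comp hf hC u measurable_id p

theorem integral_partialDep_piecewise (hf : Measurable f) (hC : ∀ x, |f x| ≤ C)
    {s a : Finset (Fin d)} (hsa : s ⊆ a) (x : Fin d → ℝ) :
    ∫ z, partialDep μ f a (s.piecewise x z) ∂Measure.pi μ = partialDep μ f s x := by
  have hswap : ∀ z w : Fin d → ℝ,
      a.piecewise (s.piecewise x z) w = s.piecewise x (a.piecewise z w) := fun z w => by
    ext i
    by_cases hs : i ∈ s
    · simp [hs, hsa hs]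
    · by_cases ha : i ∈ a <;> simp [hs, ha]
  simp only [partialDep_apply, hswap]
  have hφ : Measurable fun z : Fin d → ℝ => s.piecewise x z :=
    (measurable_piecewise_prod s).comp measurable_prodMk_left
  exact integral_integral_piecewise μ a
    (.of_bound (hf.comp hφ).aestronglyMeasurable C (ae_of_all _ fun _ => hC _))

theorem integral_partialDep_mul_partialDep (hf : Measurable f) (hC : ∀ x, |f x| ≤ C)
    (a b : Finset (Fin d)) :
    ∫ x, partialDep μ f a x * partialDep μ f b x ∂Measure.pi μ =
      ∫ x, partialDep μ f (a ∩ b) x ^ 2 ∂Measure.pi μ := by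
  set s := a ∩ b
  rw [← integral_integral_piecewise μ s (g := fun x => partialDep μ f a x * partialDep μ f b x)
    ((memLp_partialDep hf hC a 2).integrable_mul (memLp_partialDep hf hC b 2))]
  congr 1 with x
  have hφ : Measurable fun z : Fin d → ℝ => s.piecewise x z :=
    (measurable_piecewise_prod s).comp measurable_prodMk_left
  have hint := (memLp_partialDep_comp (μ := μ) hf hC a hφ 2).integrable_mul
    (memLp_partialDep_comp hf hC b hφ 2)
  rw [integral_mul_eq_mul_integral_of_piecewise μ a hint,
    integral_partialDep_piecewise hf hC inter_subset_left,
    integral_partialDep_piecewise hf hC inter_subset_right, sq]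
  · intro z w
    refine partialDep_congr a fun i hi => ?_
    by_cases hs : i ∈ s <;> simp [hs, hi]
  · intro z w
    refine partialDep_congr b fun i hi => ?_
    by_cases hs : i ∈ s
    · simp [hs]
    · have ha : i ∉ a := fun ha => hs (mem_inter.2 ⟨ha, hi⟩)
      simp [hs, ha]

end PartialDependence

section Components

variable {d : ℕ} {μ : Fin d → Measure ℝ} {f : (Fin d → ℝ) → ℝ} {C : ℝ}

theorem sum_powerset_pddComp (u : Finset (Fin d)) (x : Fin d → ℝ) :
    ∑ v ∈ u.powerset, pddComp μ f v x = partialDep μ f u x :=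
  moebius_inversion_powerset (fun v => partialDep μ f v x) u

theorem pddComp_empty (x : Fin d → ℝ) : pddComp μ f ∅ x = ∫ z, f z ∂Measure.pi μ := by
  simp [pddComp, partialDep_empty]

variable [∀ i, IsProbabilityMeasure (μ i)]

theorem sub_integral_eq_sum_pddComp (x : Fin d → ℝ) :
    f x - ∫ z, f z ∂Measure.pi μ =
      ∑ u ∈ (univ : Finset (Fin d)).powerset.erase ∅, pddComp μ f u x := by
  rw [sum_erase_eq_sub (empty_mem_powerset _), sum_powerset_pddComp, partialDep_univ,
    pddComp_empty]

theorem memLp_pddComp (hf : Measurable f) (hC : ∀ x, |f x| ≤ C) (u : Finset (Fin d))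
    (p : ℝ≥0∞) : MemLp (pddComp μ f u) p (Measure.pi μ) :=
  memLp_finsetSum _ fun v _ => (memLp_partialDep hf hC v p).const_mul _

theorem integral_pddComp_mul_partialDep_eq_zero (hf : Measurable f) (hC : ∀ x, |f x| ≤ C)
    {u b : Finset (Fin d)} {j : Fin d} (hju : j ∈ u) (hjb : j ∉ b) :
    ∫ x, pddComp μ f u x * partialDep μ f b x ∂Measure.pi μ = 0 := by
  have hint : ∀ a, Integrable (fun x => partialDep μ f a x * partialDep μ f b x) (Measure.pi μ) :=
    fun a => (memLp_partialDep hf hC a 2).integrable_mul (memLp_partialDep hf hC b 2)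
  simp_rw [pddComp, sum_mul, mul_assoc]
  rw [integral_finsetSum _ fun a _ => (hint a).const_mul _]
  simp_rw [integral_const_mul, integral_partialDep_mul_partialDep hf hC]
  exact sum_powerset_neg_one_pow_mul_eq_zero hju fun a => by rw [insert_inter_of_notMem hjb]

theorem integral_pddComp_mul_pddComp_eq_zero (hf : Measurable f) (hC : ∀ x, |f x| ≤ C)
    {u v : Finset (Fin d)} (huv : u ≠ v) :
    ∫ x, pddComp μ f u x * pddComp μ f v x ∂Measure.pi μ = 0 := by
  wlog huv' : ¬u ⊆ v generalizing u v
  · simp_rw [mul_comm (pddComp μ f u _)]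
    exact this huv.symm ((not_not.1 huv').ssubset_of_ne huv).not_subset
  obtain ⟨j, hju, hjv⟩ := not_subset.1 huv'
  have hexp : ∀ x, pddComp μ f u x * pddComp μ f v x =
      ∑ b ∈ v.powerset, (-1 : ℝ) ^ (#v - #b) * (pddComp μ f u x * partialDep μ f b x) :=
    fun x => by rw [pddComp.eq_1 μ f v x, mul_sum]; simp_rw [mul_left_comm]
  have hint : ∀ b, Integrable (fun x => pddComp μ f u x * partialDep μ f b x) (Measure.pi μ) :=
    fun b => (memLp_pddComp hf hC u 2).integrable_mul (memLp_partialDep hf hC b 2)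
  simp_rw [hexp]
  rw [integral_finsetSum _ fun b _ => (hint b).const_mul _]
  refine sum_eq_zero fun b hb => ?_
  rw [integral_const_mul, integral_pddComp_mul_partialDep_eq_zero hf hC hju
    fun hjb => hjv (mem_powerset.1 hb hjb), mul_zero]

end Components

theorem pdd_variance_decomposition_general {d : ℕ}
    (μ : Fin d → Measure ℝ) [∀ i, IsProbabilityMeasure (μ i)]
    (f : (Fin d → ℝ) → ℝ) (hf : Measurable f) (C : ℝ) (hC : ∀ x, |f x| ≤ C) :
    ∫ x, (f x - ∫ z, f z ∂(Measure.pi μ)) ^ 2 ∂(Measure.pi μ) =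
      ∑ u ∈ (Finset.univ : Finset (Fin d)).powerset.erase ∅,
        ∫ x, (pddComp μ f u x) ^ 2 ∂(Measure.pi μ) := by
  simp_rw [sub_integral_eq_sum_pddComp]
  exact integral_sum_sq_of_orthogonal _ (fun u _ => memLp_pddComp hf hC u 2)
    fun u _ v _ huv => integral_pddComp_mul_pddComp_eq_zero hf hC huv

/-- Variance decomposition: the variance of `f` is the sum of the variances of the
nonempty PDD components. -/
theorem pdd_variance_decomposition {d : ℕ} (hd : 1 ≤ d)
    (μ : Fin d → Measure ℝ) [∀ i, IsProbabilityMeasure (μ i)]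
    (f : (Fin d → ℝ) → ℝ) (hf : Measurable f) (C : ℝ) (hC : ∀ x, |f x| ≤ C) :
    ∫ x, (f x - ∫ z, f z ∂(Measure.pi μ)) ^ 2 ∂(Measure.pi μ) =
      ∑ u ∈ (Finset.univ : Finset (Fin d)).powerset.erase ∅,
        ∫ x, (pddComp μ f u x) ^ 2 ∂(Measure.pi μ) :=
  pdd_variance_decomposition_general μ f hf C hC
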